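/- Let H = (H^A ⊗ H^B) ⊕ K with dim H^A = m, and let Γ' : B(H) → B(H) be the quantum operation with Kraus operators {(1/√m) P_kl : 1 ≤ k, l ≤ m} ∪ {P_𝔄^⊥}, where P_𝔄^⊥ is the projection onto K. Suppose T : B(H) → B(H) is a linear map that is trace preserving on operators supported on H^A ⊗ H^B and satisfies: for every σ^B ∈ B(H^B) there exists τ^A ∈ B(H^A) with T(1^A ⊗ σ^B) = τ^A ⊗ σ^B. Then (Γ' ∘ T)(1^A ⊗ σ^B) = 1^A ⊗ σ^B for all σ^B ∈ B(H^B). -/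

import Mathlib

open scoped Kronecker Matrix

noncomputable section

abbrev HIdx (m n p : ℕ) : Type := (Fin m × Fin n) ⊕ Fin p

def embed {m n p : ℕ} (M : Matrix (Fin m × Fin n) (Fin m × Fin n) ℂ) :
    Matrix (HIdx m n p) (HIdx m n p) ℂ :=
  Matrix.fromBlocks M 0 0 0

def PA (m n p : ℕ) : Matrix (HIdx m n p) (HIdx m n p) ℂ :=
  embed 1

def Pmu {m : ℕ} (n p : ℕ) (k l : Fin m) : Matrix (HIdx m n p) (HIdx m n p) ℂ :=
  embed (Matrix.single k l (1 : ℂ) ⊗ₖ (1 : Matrix (Fin n) (Fin n) ℂ))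

def trA {m n p : ℕ} (M : Matrix (HIdx m n p) (HIdx m n p) ℂ) :
    Matrix (Fin n) (Fin n) ℂ :=
  Matrix.of fun i j => ∑ k : Fin m, M (Sum.inl (k, i)) (Sum.inl (k, j))

def IsQuantumOperation {d : Type} [Fintype d] [DecidableEq d]
    (E : Matrix d d ℂ →ₗ[ℂ] Matrix d d ℂ) : Prop :=
  ∃ (ι : Type) (_ : Fintype ι) (K : ι → Matrix d d ℂ),
    (∀ ρ, E ρ = ∑ a, K a * ρ * (K a)ᴴ) ∧ ∑ a, (K a)ᴴ * K a = 1

/-- `P_𝔄^⊥`, the orthogonal projection of `H` onto `K`. -/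
def PAperp (m n p : ℕ) : Matrix (HIdx m n p) (HIdx m n p) ℂ :=
  Matrix.fromBlocks 0 0 0 1

/-! Write `T (1 ⊗ σ) = τ_σ ⊗ σ`. The Kraus operators `P_kl / √m` send `τ ⊗ σ` to
`(tr τ / m) (1 ⊗ σ)` and `P_𝔄^⊥` kills it, so it suffices that `tr τ_σ • σ = m • σ`.
The map `σ ↦ tr_A T (1 ⊗ σ) = tr τ_σ • σ` is additive and has every `σ` as an eigenvector,
hence is a homothety; trace preservation gives `tr τ_σ = m` as soon as `tr σ ≠ 0`, which
identifies the ratio as `m`. -/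

theorem AddMonoidHom.eq_smul_of_forall_exists_smul {K V : Type*} [CommRing K] [IsDomain K]
    [AddCommGroup V] [Module K V] (L : V →+ V) (φ : V →ₗ[K] K) (hφ : φ ≠ 0) (a : K)
    (hL : ∀ v, ∃ c : K, L v = c • v) (hφL : ∀ v, φ (L v) = a * φ v) (v : V) :
    L v = a • v := by
  have of_ne_zero : ∀ w, φ w ≠ 0 → L w = a • w := by
    intro w hw
    obtain ⟨c, hc⟩ := hL w
    have : c * φ w = a * φ w := by rw [← smul_eq_mul, ← map_smul, ← hc, hφL]
    rw [hc, mul_right_cancel₀ hw this]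
  by_cases hv : φ v = 0
  · obtain ⟨e, he⟩ : ∃ e, φ e ≠ 0 := by simpa [LinearMap.ext_iff] using hφ
    -- `v` is an eigenvector because `v + e` and `e` are, both lying off `ker φ`.
    have hve : L (v + e) = a • (v + e) := of_ne_zero _ (by simpa [hv] using he)
    rwa [map_add, of_ne_zero e he, smul_add, add_left_inj] at hve
  · exact of_ne_zero v hv

theorem Matrix.sum_kronecker {ι l m n p α : Type*} [NonUnitalNonAssocSemiring α] (s : Finset ι)
    (A : ι → Matrix l m α) (B : Matrix n p α) : (∑ i ∈ s, A i) ⊗ₖ B = ∑ i ∈ s, A i ⊗ₖ B := by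
  ext
  simp [Matrix.sum_apply, Finset.sum_mul]

section Blocks

variable {m n p : ℕ}

lemma embed_add (A B : Matrix (Fin m × Fin n) (Fin m × Fin n) ℂ) :
    (embed (A + B) : Matrix (HIdx m n p) _ _) = embed A + embed B := by
  simp [embed, Matrix.fromBlocks_add]

lemma embed_smul (c : ℂ) (A : Matrix (Fin m × Fin n) (Fin m × Fin n) ℂ) :
    (embed (c • A) : Matrix (HIdx m n p) _ _) = c • embed A := by
  simp [embed, Matrix.fromBlocks_smul]

lemma embed_sum {ι : Type*} (s : Finset ι) (f : ι → Matrix (Fin m × Fin n) (Fin m × Fin n) ℂ) :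
    (embed (∑ i ∈ s, f i) : Matrix (HIdx m n p) _ _) = ∑ i ∈ s, embed (f i) := by
  ext (i | i) (j | j) <;> simp [embed, Matrix.sum_apply]

lemma embed_mul (A B : Matrix (Fin m × Fin n) (Fin m × Fin n) ℂ) :
    (embed A : Matrix (HIdx m n p) _ _) * embed B = embed (A * B) := by
  simp [embed, Matrix.fromBlocks_multiply]

lemma embed_conjTranspose (A : Matrix (Fin m × Fin n) (Fin m × Fin n) ℂ) :
    (embed A : Matrix (HIdx m n p) _ _)ᴴ = embed Aᴴ := by
  simp [embed, Matrix.fromBlocks_conjTranspose]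

lemma trace_embed (A : Matrix (Fin m × Fin n) (Fin m × Fin n) ℂ) :
    (embed A : Matrix (HIdx m n p) _ _).trace = A.trace := by
  simp [embed, Matrix.trace, Fintype.sum_sum_type]

lemma PA_mul_embed_mul_PA (A : Matrix (Fin m × Fin n) (Fin m × Fin n) ℂ) :
    PA m n p * embed A * PA m n p = embed A := by
  rw [PA, embed_mul, embed_mul, one_mul, mul_one]

lemma PAperp_mul_embed (A : Matrix (Fin m × Fin n) (Fin m × Fin n) ℂ) :
    PAperp m n p * embed A = 0 := by
  simp [PAperp, embed, Matrix.fromBlocks_multiply]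

lemma trA_add (M N : Matrix (HIdx m n p) (HIdx m n p) ℂ) : trA (M + N) = trA M + trA N := by
  ext i j
  simp [trA, Finset.sum_add_distrib]

lemma trA_embed_kronecker (τ : Matrix (Fin m) (Fin m) ℂ) (σ : Matrix (Fin n) (Fin n) ℂ) :
    trA (embed (τ ⊗ₖ σ) : Matrix (HIdx m n p) _ _) = τ.trace • σ := by
  ext i j
  simp [trA, embed, Matrix.trace, Finset.sum_mul]

lemma Pmu_conjTranspose (k l : Fin m) : (Pmu n p k l)ᴴ = Pmu n p l k := by
  simp [Pmu, embed_conjTranspose, Matrix.conjTranspose_kronecker, Matrix.conjTranspose_single]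

lemma Pmu_mul_embed_kronecker_mul_Pmu (k l : Fin m) (τ : Matrix (Fin m) (Fin m) ℂ)
    (σ : Matrix (Fin n) (Fin n) ℂ) :
    Pmu n p k l * embed (τ ⊗ₖ σ) * Pmu n p l k = τ l l • embed (Matrix.single k k 1 ⊗ₖ σ) := by
  rw [Pmu, Pmu, embed_mul, embed_mul, ← Matrix.mul_kronecker_mul, ← Matrix.mul_kronecker_mul,
    Matrix.single_mul_mul_single, one_mul, mul_one, ← embed_smul, ← Matrix.smul_kronecker,
    Matrix.smul_single, smul_eq_mul, mul_one, one_mul, mul_one]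

lemma sum_Pmu_mul_embed_kronecker_mul_Pmu (τ : Matrix (Fin m) (Fin m) ℂ)
    (σ : Matrix (Fin n) (Fin n) ℂ) :
    ∑ k, ∑ l, Pmu n p k l * embed (τ ⊗ₖ σ) * Pmu n p l k = τ.trace • embed (1 ⊗ₖ σ) := by
  simp_rw [Pmu_mul_embed_kronecker_mul_Pmu, ← Finset.sum_smul]
  rw [← Finset.smul_sum, ← embed_sum, ← Matrix.sum_kronecker, Matrix.sum_single_one]
  rfl

end Blocks

theorem Matrix.inv_sqrt_smul_mul_mul_conjTranspose {d : Type*} [Fintype d] (r : ℝ) (hr : 0 ≤ r)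
    (A X : Matrix d d ℂ) :
    ((((Real.sqrt r : ℝ) : ℂ))⁻¹ • A) * X * ((((Real.sqrt r : ℝ) : ℂ))⁻¹ • A)ᴴ =
      ((r : ℂ))⁻¹ • (A * X * Aᴴ) := by
  have hsq : ((Real.sqrt r : ℝ) : ℂ) * ((Real.sqrt r : ℝ) : ℂ) = r := by
    rw [← Complex.ofReal_mul, Real.mul_self_sqrt hr]
  rw [Matrix.conjTranspose_smul, Matrix.smul_mul, Matrix.smul_mul, Matrix.mul_smul, smul_smul,
    ← hsq, mul_inv, Complex.star_def, ← Complex.ofReal_inv, Complex.conj_ofReal]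

theorem trace_smul_eq_of_map_embed_one_kronecker {m n p : ℕ}
    (T : Matrix (HIdx m n p) (HIdx m n p) ℂ →ₗ[ℂ] Matrix (HIdx m n p) (HIdx m n p) ℂ)
    (hTtrace : ∀ σ : Matrix (HIdx m n p) (HIdx m n p) ℂ,
      σ = PA m n p * σ * PA m n p → (T σ).trace = σ.trace)
    (hT : ∀ σB : Matrix (Fin n) (Fin n) ℂ, ∃ τA : Matrix (Fin m) (Fin m) ℂ,
      T (embed ((1 : Matrix (Fin m) (Fin m) ℂ) ⊗ₖ σB)) = embed (τA ⊗ₖ σB))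
    {σ : Matrix (Fin n) (Fin n) ℂ} {τ : Matrix (Fin m) (Fin m) ℂ}
    (h : T (embed (1 ⊗ₖ σ)) = embed (τ ⊗ₖ σ)) :
    τ.trace • σ = (m : ℂ) • σ := by
  rcases isEmpty_or_nonempty (Fin n) with _ | ⟨⟨i⟩⟩
  · exact Subsingleton.elim _ _
  let L : Matrix (Fin n) (Fin n) ℂ →+ Matrix (Fin n) (Fin n) ℂ :=
    AddMonoidHom.mk' (fun σ => trA (T (embed (1 ⊗ₖ σ))))
      (fun σ σ' => by simp only [Matrix.kronecker_add, embed_add, map_add, trA_add])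
  have hL_apply : ∀ {σ τ}, T (embed (1 ⊗ₖ σ)) = embed (τ ⊗ₖ σ) → L σ = τ.trace • σ := by
    intro σ τ h
    simp only [L, AddMonoidHom.mk'_apply, h, trA_embed_kronecker]
  have htrace : Matrix.traceLinearMap (Fin n) ℂ ℂ ≠ 0 := fun h0 => by
    simpa using LinearMap.congr_fun h0 (Matrix.single i i 1)
  have hL_eigen : ∀ σ, ∃ c : ℂ, L σ = c • σ := fun σ =>
    let ⟨τ, h⟩ := hT σ
    ⟨τ.trace, hL_apply h⟩
  have hL_trace : ∀ σ, Matrix.traceLinearMap (Fin n) ℂ ℂ (L σ) =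
      m * Matrix.traceLinearMap (Fin n) ℂ ℂ σ := by
    intro σ
    obtain ⟨τ, h⟩ := hT σ
    have hpres := hTtrace _ (PA_mul_embed_mul_PA (1 ⊗ₖ σ)).symm
    rw [h, trace_embed, trace_embed, Matrix.trace_kronecker, Matrix.trace_kronecker,
      Matrix.trace_one, Fintype.card_fin] at hpres
    rw [Matrix.traceLinearMap_apply, Matrix.traceLinearMap_apply, hL_apply h, Matrix.trace_smul,
      smul_eq_mul, hpres]
  rw [← hL_apply h, L.eq_smul_of_forall_exists_smul _ htrace m hL_eigen hL_trace]

/-- If `T` is linear, trace preserving on operators supported on `H^A ⊗ H^B`, and maps each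
`1^A ⊗ σ^B` to some `τ^A ⊗ σ^B`, then composing with the quantum operation `Γ'` with Kraus
operators `{(1/√m) P_{kl}} ∪ {P_𝔄^⊥}` gives `(Γ' ∘ T)(1^A ⊗ σ^B) = 1^A ⊗ σ^B`. -/
theorem gamma_prime_correction {m n p : ℕ}
    (T : Matrix (HIdx m n p) (HIdx m n p) ℂ →ₗ[ℂ] Matrix (HIdx m n p) (HIdx m n p) ℂ)
    (hTtrace : ∀ σ : Matrix (HIdx m n p) (HIdx m n p) ℂ,
      σ = PA m n p * σ * PA m n p → (T σ).trace = σ.trace)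
    (hT : ∀ σB : Matrix (Fin n) (Fin n) ℂ, ∃ τA : Matrix (Fin m) (Fin m) ℂ,
      T (embed ((1 : Matrix (Fin m) (Fin m) ℂ) ⊗ₖ σB)) = embed (τA ⊗ₖ σB)) :
    ∀ σB : Matrix (Fin n) (Fin n) ℂ,
      (∑ k : Fin m, ∑ l : Fin m,
          ((((Real.sqrt m : ℝ) : ℂ))⁻¹ • Pmu n p k l) *
            T (embed ((1 : Matrix (Fin m) (Fin m) ℂ) ⊗ₖ σB)) *
            ((((Real.sqrt m : ℝ) : ℂ))⁻¹ • Pmu n p k l)ᴴ) +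
        PAperp m n p * T (embed ((1 : Matrix (Fin m) (Fin m) ℂ) ⊗ₖ σB)) *
          (PAperp m n p)ᴴ =
      embed ((1 : Matrix (Fin m) (Fin m) ℂ) ⊗ₖ σB) := by
  intro σB
  obtain ⟨τ, hτ⟩ := hT σB
  have hscalar := trace_smul_eq_of_map_embed_one_kronecker T hTtrace hT hτ
  simp_rw [hτ, PAperp_mul_embed, zero_mul, add_zero,
    Matrix.inv_sqrt_smul_mul_mul_conjTranspose _ (Nat.cast_nonneg m), Pmu_conjTranspose,
    ← Finset.smul_sum, sum_Pmu_mul_embed_kronecker_mul_Pmu]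
  rcases eq_or_ne m 0 with rfl | hm
  · simp [embed, Subsingleton.elim (1 : Matrix (Fin 0) (Fin 0) ℂ) 0]
  · rw [← embed_smul, ← Matrix.kronecker_smul, hscalar, Matrix.kronecker_smul, embed_smul,
      Complex.ofReal_natCast, inv_smul_smul₀ (Nat.cast_ne_zero.mpr hm)]
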